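/- Let L₁ and L₂ be regular languages over Σ with L₁ ⊆ ⋃_{α ∈ Σ^κ} Σ*·α·Σ*·overline(α) and L₂ ⊆ ⋃_{α ∈ Σ^κ} α·Σ*·overline(α)·Σ*. Let λ = max(λ_{L₁}, λ_{L₂}) and let η = λ_{H_κ(L₁,L₂)}. Then: η > 1 if and only if λ > 1; η = 1 if and only if λ = 1; and η = 0 if and only if λ = 0. In particular, the growth of H_κ(L₁,L₂) is exponential (respectively sub-exponential but infinite, respectively finite) if and only if the maximum growth of L₁ and L₂ is exponential (respectively sub-exponential but infinite, respectively finite). -/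

import Mathlib

/-- The antimorphic extension of an involution on letters to words. -/
def ovr {σ : Type} (bar : σ → σ) (w : List σ) : List σ := (w.map bar).reverse

/-- The hairpin completion `H_κ(L₁, L₂)`. -/
def hairpinCompletion {σ : Type} (bar : σ → σ) (κ : ℕ) (L1 L2 : Language σ) :
    Language σ :=
  { π | ∃ γ α β : List σ,
      π = γ ++ α ++ β ++ ovr bar α ++ ovr bar γ ∧
      κ ≤ α.length ∧
      (γ ++ α ++ β ++ ovr bar α ∈ L1 ∨ α ++ β ++ ovr bar α ++ ovr bar γ ∈ L2) }

/-- The canonical factorization `(γ, α, β)` of a word `π` of the hairpin completion. -/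
def CanonFact {σ : Type} (bar : σ → σ) (κ : ℕ) (L1 L2 : Language σ)
    (π γ α β : List σ) : Prop :=
  π = γ ++ α ++ β ++ ovr bar α ++ ovr bar γ ∧
  α.length = κ ∧
  (γ ++ α ++ β ++ ovr bar α ∈ L1 ∨ α ++ β ++ ovr bar α ++ ovr bar γ ∈ L2) ∧
  (∀ u : List σ, u <+: π → u ∈ L1 → u <+: γ ++ α ++ β ++ ovr bar α) ∧
  (∀ u : List σ, u <:+ π → u ∈ L2 → u <:+ α ++ β ++ ovr bar α ++ ovr bar γ)

/-- The language of minimal gamma-alpha-prefixes of words of the hairpin completion. -/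
def MGP {σ : Type} (bar : σ → σ) (κ : ℕ) (L1 L2 : Language σ) : Language σ :=
  { p | ∃ π γ α β : List σ, π ∈ hairpinCompletion bar κ L1 L2 ∧
      CanonFact bar κ L1 L2 π γ α β ∧ p = γ ++ α }

/-- The language of middle factors of canonical factorizations of words
of the hairpin completion. -/
def Mid {σ : Type} (bar : σ → σ) (κ : ℕ) (L1 L2 : Language σ) : Language σ :=
  { β | ∃ π γ α : List σ, π ∈ hairpinCompletion bar κ L1 L2 ∧
      CanonFact bar κ L1 L2 π γ α β }

/-- The growth indicator of a language: the infimum of all `λ ≥ 0` such that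
`|L ∩ Σ^m| ≤ c·λ^m` for some constant `c > 0` and all `m`. -/
noncomputable def growthInd {σ : Type} (L : Language σ) : ℝ :=
  sInf { l : ℝ | 0 ≤ l ∧ ∃ c : ℝ, 0 < c ∧
    ∀ m : ℕ, (Set.ncard { w : List σ | w ∈ L ∧ w.length = m } : ℝ) ≤ c * l ^ m }

/-!
Over a finite alphabet the growth indicator of a language is `0` when the lengths of its words
are bounded and at least `1` otherwise, so the three growth types are told apart by two
properties: growth `0` and growth `≤ 1`.

Every word `π` of the hairpin completion is determined by its length and a word `w` of `L1` or
`L2` with `|w| ≤ |π| ≤ 2|w|`; conversely every word of `L1` (of `L2`) is a prefix (a suffix) of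
a word of the completion at most twice as long. So the numbers of words of each length bound
each other up to a polynomial factor and a doubling of the length, which at most squares the
growth. Neither operation affects bounded lengths or growth `≤ 1`.
-/

open Filter Finset

section GrowthRate

def growthBounds (a : ℕ → ℕ) : Set ℝ :=
  {l | 0 ≤ l ∧ ∃ c : ℝ, 0 < c ∧ ∀ m, (a m : ℝ) ≤ c * l ^ m}

noncomputable def growthRate (a : ℕ → ℕ) : ℝ := sInf (growthBounds a)

variable {a b : ℕ → ℕ} {l : ℝ}

lemma mem_growthBounds_of_le {t : ℝ} (hl : l ∈ growthBounds a) (hlt : l ≤ t) :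
    t ∈ growthBounds a := by
  obtain ⟨hl0, c, hc, ha⟩ := hl
  exact ⟨hl0.trans hlt, c, hc, fun m => (ha m).trans (by gcongr)⟩

lemma add_mem_growthBounds (ha : l ∈ growthBounds a) (hb : l ∈ growthBounds b) :
    l ∈ growthBounds (fun m => a m + b m) := by
  obtain ⟨hl0, c, hc, hac⟩ := ha
  obtain ⟨-, d, hd, hbd⟩ := hb
  refine ⟨hl0, c + d, by positivity, fun m => ?_⟩
  push_cast
  linarith [hac m, hbd m]

lemma growthRate_nonneg : 0 ≤ growthRate a := Real.sInf_nonneg fun _ hl => hl.1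

lemma growthRate_le_of_mem (hl : l ∈ growthBounds a) : growthRate a ≤ l :=
  csInf_le ⟨0, fun _ h => h.1⟩ hl

lemma growthRate_le_iff (hne : (growthBounds a).Nonempty) :
    growthRate a ≤ l ↔ ∀ t, l < t → t ∈ growthBounds a := by
  refine ⟨fun h t hlt => ?_, fun h =>
    le_of_forall_gt_imp_ge_of_dense fun t hlt => growthRate_le_of_mem (h t hlt)⟩
  obtain ⟨l', hl', hl't⟩ := exists_lt_of_csInf_lt hne (h.trans_lt hlt)
  exact mem_growthBounds_of_le hl' hl't.le

lemma growthRate_eq_zero_of_eventually_eq_zero (h : ∀ᶠ m in atTop, a m = 0) :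
    growthRate a = 0 := by
  obtain ⟨N, hN⟩ := eventually_atTop.1 h
  refine le_antisymm (le_of_forall_gt_imp_ge_of_dense fun t ht => growthRate_le_of_mem ?_)
    growthRate_nonneg
  -- below `N` the constant absorbs the finitely many ratios `a m / t ^ m`
  refine ⟨ht.le, ∑ j ∈ range N, (a j : ℝ) / t ^ j + 1, by positivity, fun m => ?_⟩
  rcases lt_or_ge m N with hm | hm
  · have hle : (a m : ℝ) / t ^ m ≤ ∑ j ∈ range N, (a j : ℝ) / t ^ j :=
      single_le_sum (f := fun j => (a j : ℝ) / t ^ j) (fun j _ => by positivity)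
        (mem_range.2 hm)
    calc (a m : ℝ) = (a m : ℝ) / t ^ m * t ^ m := by field_simp
      _ ≤ (∑ j ∈ range N, (a j : ℝ) / t ^ j + 1) * t ^ m := by gcongr; linarith
  · rw [hN m hm, Nat.cast_zero]
    positivity

lemma one_le_growthRate (hne : (growthBounds a).Nonempty) (h : ∃ᶠ m in atTop, a m ≠ 0) :
    1 ≤ growthRate a := by
  refine le_csInf hne fun l ⟨hl0, c, _, ha⟩ => ?_
  by_contra! hl1
  have hsmall : ∀ᶠ m in atTop, c * l ^ m < 1 := by
    have := (tendsto_pow_atTop_nhds_zero_of_lt_one hl0 hl1).const_mul c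
    rw [mul_zero] at this
    exact this.eventually_lt_const zero_lt_one
  obtain ⟨m, ham, hm⟩ := (h.and_eventually hsmall).exists
  have : (1 : ℝ) ≤ a m := by exact_mod_cast Nat.one_le_iff_ne_zero.2 ham
  linarith [ha m]

lemma growthRate_eq_zero_iff (hne : (growthBounds a).Nonempty) :
    growthRate a = 0 ↔ ∀ᶠ m in atTop, a m = 0 := by
  refine ⟨fun h => ?_, growthRate_eq_zero_of_eventually_eq_zero⟩
  by_contra hfreq
  have := one_le_growthRate hne (not_eventually.1 hfreq)
  linarith

lemma growthRate_eq_zero_or_one_le (hne : (growthBounds a).Nonempty) :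
    growthRate a = 0 ∨ 1 ≤ growthRate a := by
  by_cases h : ∀ᶠ m in atTop, a m = 0
  · exact Or.inl (growthRate_eq_zero_of_eventually_eq_zero h)
  · exact Or.inr (one_le_growthRate hne (not_eventually.1 h))

lemma exists_add_one_le_mul_pow {r : ℝ} (hr : 1 < r) :
    ∃ C : ℝ, 0 < C ∧ ∀ m : ℕ, (m + 1 : ℝ) ≤ C * r ^ m := by
  have hr1 : 0 < r - 1 := by linarith
  refine ⟨r / (r - 1), by positivity, fun m => ?_⟩
  have hC : r / (r - 1) * (r - 1) = r := div_mul_cancel₀ r hr1.ne'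
  have hC1 : 1 ≤ r / (r - 1) := by rw [le_div_iff₀ hr1]; linarith
  have hpow : 1 + (m : ℝ) * (r - 1) ≤ r ^ m := by
    simpa using one_add_mul_le_pow (show (-2 : ℝ) ≤ r - 1 by linarith) m
  have hm : (0 : ℝ) ≤ m := m.cast_nonneg
  calc (m + 1 : ℝ) ≤ r / (r - 1) * (1 + m * (r - 1)) := by nlinarith
    _ ≤ r / (r - 1) * r ^ m := by gcongr

lemma growthRate_le_of_le_mul_pow (hl : 1 ≤ l) {c : ℝ} (hc : 0 < c)
    (ha : ∀ m, (a m : ℝ) ≤ c * ((m + 1) * l ^ m)) : growthRate a ≤ l := by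
  refine le_of_forall_gt_imp_ge_of_dense fun t hlt => growthRate_le_of_mem ?_
  have hl0 : 0 < l := by linarith
  obtain ⟨C, hC, hCm⟩ := exists_add_one_le_mul_pow ((one_lt_div hl0).2 hlt)
  refine ⟨by linarith, c * C, by positivity, fun m => ?_⟩
  calc (a m : ℝ) ≤ c * ((m + 1) * l ^ m) := ha m
    _ ≤ c * (C * (t / l) ^ m * l ^ m) := by gcongr; exact hCm m
    _ = c * C * t ^ m := by rw [div_pow]; field_simp

lemma growthRate_le_pow_of_le_sum {s : ℕ → Finset ℕ} {k : ℕ}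
    (hcard : ∀ n, #(s n) ≤ n + 1) (hmem : ∀ n, ∀ m ∈ s n, m ≤ k * n)
    (hl : 1 ≤ l) (hb : l ∈ growthBounds b) (h : ∀ n, a n ≤ ∑ m ∈ s n, b m) :
    growthRate a ≤ l ^ k := by
  obtain ⟨-, c, hc, hbc⟩ := hb
  refine growthRate_le_of_le_mul_pow (one_le_pow₀ hl) hc fun n => ?_
  calc (a n : ℝ) ≤ ∑ m ∈ s n, (b m : ℝ) := by exact_mod_cast h n
    _ ≤ ∑ m ∈ s n, c * (l ^ k) ^ n := sum_le_sum fun m hm =>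
        (hbc m).trans (by rw [← pow_mul]; gcongr; exact hmem n m hm)
    _ = c * (#(s n) * (l ^ k) ^ n) := by rw [sum_const, nsmul_eq_mul]; ring
    _ ≤ c * ((n + 1) * (l ^ k) ^ n) := by gcongr; exact_mod_cast hcard n

lemma growthRate_le_one_of_le_sum_range (h : ∀ n, a n ≤ ∑ m ∈ range (n + 1), b m)
    (hb : ∀ t, 1 < t → t ∈ growthBounds b) : growthRate a ≤ 1 :=
  le_of_forall_gt_imp_ge_of_dense fun t ht => by
    simpa using growthRate_le_pow_of_le_sum (k := 1) (fun n => (card_range _).le)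
      (fun n m hm => by simpa [Nat.lt_succ_iff] using hm) ht.le (hb t ht) h

lemma growthRate_le_one_of_le_sum_Icc (h : ∀ n, a n ≤ ∑ m ∈ Icc n (2 * n), b m)
    (hb : ∀ t, 1 < t → t ∈ growthBounds b) : growthRate a ≤ 1 := by
  refine le_of_forall_gt_imp_ge_of_dense fun t ht => ?_
  have hr : 1 < √t := by rw [Real.lt_sqrt zero_le_one]; simpa
  have := growthRate_le_pow_of_le_sum (k := 2) (fun n => by rw [Nat.card_Icc]; omega)
    (fun n m hm => (mem_Icc.1 hm).2) hr.le (hb _ hr) h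
  rwa [Real.sq_sqrt (by linarith)] at this

end GrowthRate

namespace Language

variable {σ : Type}

noncomputable def countOfLength (L : Language σ) (m : ℕ) : ℕ :=
  {w | w ∈ L ∧ w.length = m}.ncard

lemma growthInd_eq_growthRate (L : Language σ) :
    growthInd L = growthRate L.countOfLength := rfl

lemma ncard_length_mem_le_sum (L : Language σ) (s : Finset ℕ) :
    {w | w ∈ L ∧ w.length ∈ s}.ncard ≤ ∑ m ∈ s, L.countOfLength m := by
  have : {w | w ∈ L ∧ w.length ∈ s} = ⋃ m ∈ s, {w | w ∈ L ∧ w.length = m} := by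
    ext w; simp
  rw [this]
  exact s.set_ncard_biUnion_le _

variable [Fintype σ] (L : Language σ)

lemma finite_setOf_length_mem (s : Finset ℕ) : {w | w ∈ L ∧ w.length ∈ s}.Finite :=
  (List.finite_length_le σ (s.sup id)).subset fun _ hw => le_sup (f := id) hw.2

lemma countOfLength_le_card_pow (m : ℕ) : L.countOfLength m ≤ Fintype.card σ ^ m :=
  calc L.countOfLength m ≤ {w : List σ | w.length = m}.ncard :=
        Set.ncard_le_ncard (fun _ hw => hw.2) (List.finite_length_eq σ m)
    _ = Fintype.card σ ^ m := by
        rw [← Nat.card_coe_set_eq, ← card_vector, ← Nat.card_eq_fintype_card]; rfl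

lemma growthBounds_countOfLength_nonempty : (growthBounds L.countOfLength).Nonempty :=
  ⟨Fintype.card σ, by positivity, 1, one_pos, fun m => by
    rw [one_mul]; exact_mod_cast L.countOfLength_le_card_pow m⟩

lemma eventually_countOfLength_eq_zero_iff :
    (∀ᶠ m in atTop, L.countOfLength m = 0) ↔ BddAbove (List.length '' L) := by
  have hfin (m : ℕ) : {w | w ∈ L ∧ w.length = m}.Finite :=
    (List.finite_length_eq σ m).subset fun _ hw => hw.2
  rw [eventually_atTop]
  constructor
  · rintro ⟨N, hN⟩
    refine ⟨N, Set.forall_mem_image.2 fun w hw => ?_⟩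
    by_contra! hlt
    have hempty := (Set.ncard_eq_zero (hfin _)).1 (hN _ hlt.le)
    exact hempty.subset ⟨hw, rfl⟩
  · rintro ⟨N, hN⟩
    refine ⟨N + 1, fun m hm => (Set.ncard_eq_zero (hfin m)).2 ?_⟩
    refine Set.eq_empty_of_forall_notMem fun w ⟨hw, hwm⟩ => ?_
    have := hN (Set.mem_image_of_mem _ hw)
    omega

lemma growthInd_le_iff {l : ℝ} :
    growthInd L ≤ l ↔ ∀ t, l < t → t ∈ growthBounds L.countOfLength :=
  growthRate_le_iff L.growthBounds_countOfLength_nonempty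

lemma growthInd_eq_zero_iff : growthInd L = 0 ↔ BddAbove (List.length '' L) := by
  rw [growthInd_eq_growthRate, growthRate_eq_zero_iff L.growthBounds_countOfLength_nonempty,
    eventually_countOfLength_eq_zero_iff]

lemma growthInd_eq_zero_or_one_le : growthInd L = 0 ∨ 1 ≤ growthInd L :=
  growthRate_eq_zero_or_one_le L.growthBounds_countOfLength_nonempty

end Language

section Hairpin

open Language

variable {σ : Type} {bar : σ → σ} {κ : ℕ} {L1 L2 : Language σ}

@[simp] lemma length_ovr (bar : σ → σ) (w : List σ) : (ovr bar w).length = w.length := by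
  simp [ovr]

lemma ovr_append (bar : σ → σ) (u v : List σ) : ovr bar (u ++ v) = ovr bar v ++ ovr bar u := by
  simp [ovr]

lemma ovr_ovr (hbar : Function.Involutive bar) (w : List σ) : ovr bar (ovr bar w) = w := by
  simp [ovr, List.map_reverse, hbar.comp_self]

lemma exists_hairpinCompletion_of_mem_left
    (hL1 : ∀ w ∈ L1, ∃ u α v : List σ, α.length = κ ∧ w = u ++ α ++ v ++ ovr bar α)
    {w : List σ} (hw : w ∈ L1) :
    ∃ π ∈ hairpinCompletion bar κ L1 L2, w <+: π ∧ π.length ≤ 2 * w.length := by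
  obtain ⟨u, α, v, hα, rfl⟩ := hL1 w hw
  refine ⟨_ ++ ovr bar u, ⟨u, α, v, rfl, hα.ge, Or.inl hw⟩, List.prefix_append _ _, ?_⟩
  simp only [List.length_append, length_ovr]
  omega

lemma exists_hairpinCompletion_of_mem_right (hbar : Function.Involutive bar)
    (hL2 : ∀ w ∈ L2, ∃ α u v : List σ, α.length = κ ∧ w = α ++ u ++ ovr bar α ++ v)
    {w : List σ} (hw : w ∈ L2) :
    ∃ π ∈ hairpinCompletion bar κ L1 L2, w <:+ π ∧ π.length ≤ 2 * w.length := by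
  obtain ⟨α, u, v, hα, rfl⟩ := hL2 w hw
  refine ⟨ovr bar v ++ _, ⟨ovr bar v, α, u, ?_, hα.ge, Or.inr ?_⟩,
    List.suffix_append _ _, ?_⟩
  · simp [ovr_ovr hbar]
  · rwa [ovr_ovr hbar]
  · simp only [List.length_append, length_ovr]
    omega

lemma exists_of_mem_hairpinCompletion (hbar : Function.Involutive bar) {π : List σ}
    (hπ : π ∈ hairpinCompletion bar κ L1 L2) :
    ∃ w, w.length ≤ π.length ∧ π.length ≤ 2 * w.length ∧
      (w ∈ L1 ∧ π = w ++ ovr bar (w.take (π.length - w.length)) ∨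
       w ∈ L2 ∧ π = (ovr bar w).take (π.length - w.length) ++ w) := by
  obtain ⟨γ, α, β, rfl, -, h1 | h2⟩ := hπ
  · refine ⟨_, by simp, by simp only [List.length_append, length_ovr]; omega,
      Or.inl ⟨h1, ?_⟩⟩
    have : (γ ++ α ++ β ++ ovr bar α ++ ovr bar γ).length -
        (γ ++ α ++ β ++ ovr bar α).length = γ.length := by
      simp only [List.length_append, length_ovr]; omega
    rw [this]
    simp
  · refine ⟨_, by simp, by simp only [List.length_append, length_ovr]; omega,
      Or.inr ⟨h2, ?_⟩⟩
    have : (γ ++ α ++ β ++ ovr bar α ++ ovr bar γ).length -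
        (α ++ β ++ ovr bar α ++ ovr bar γ).length = γ.length := by simp
    rw [this]
    simp [ovr_append, ovr_ovr hbar]

lemma bddAbove_length_hairpinCompletion_iff (hbar : Function.Involutive bar)
    (hL1 : ∀ w ∈ L1, ∃ u α v : List σ, α.length = κ ∧ w = u ++ α ++ v ++ ovr bar α)
    (hL2 : ∀ w ∈ L2, ∃ α u v : List σ, α.length = κ ∧ w = α ++ u ++ ovr bar α ++ v) :
    BddAbove (List.length '' hairpinCompletion bar κ L1 L2) ↔
      BddAbove (List.length '' L1) ∧ BddAbove (List.length '' L2) := by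
  constructor
  · rintro ⟨N, hN⟩
    refine ⟨⟨N, Set.forall_mem_image.2 fun w hw => ?_⟩,
      ⟨N, Set.forall_mem_image.2 fun w hw => ?_⟩⟩
    · obtain ⟨π, hπ, hwπ, -⟩ := exists_hairpinCompletion_of_mem_left (L2 := L2) hL1 hw
      exact hwπ.length_le.trans (hN (Set.mem_image_of_mem _ hπ))
    · obtain ⟨π, hπ, hwπ, -⟩ := exists_hairpinCompletion_of_mem_right (L1 := L1) hbar hL2 hw
      exact hwπ.length_le.trans (hN (Set.mem_image_of_mem _ hπ))
  · rintro ⟨⟨N1, hN1⟩, ⟨N2, hN2⟩⟩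
    refine ⟨2 * (N1 + N2), Set.forall_mem_image.2 fun π hπ => ?_⟩
    obtain ⟨w, -, hlen, ⟨hw, -⟩ | ⟨hw, -⟩⟩ := exists_of_mem_hairpinCompletion hbar hπ
    · have := hN1 (Set.mem_image_of_mem _ hw)
      omega
    · have := hN2 (Set.mem_image_of_mem _ hw)
      omega

variable [Fintype σ]

lemma countOfLength_hairpinCompletion_le (hbar : Function.Involutive bar) (m : ℕ) :
    (hairpinCompletion bar κ L1 L2).countOfLength m ≤
      ∑ j ∈ range (m + 1), (L1.countOfLength j + L2.countOfLength j) := by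
  set A1 := {w | w ∈ L1 ∧ w.length ∈ range (m + 1)}
  set A2 := {w | w ∈ L2 ∧ w.length ∈ range (m + 1)}
  set f1 := fun w : List σ => w ++ ovr bar (w.take (m - w.length))
  set f2 := fun w : List σ => (ovr bar w).take (m - w.length) ++ w
  have hsub :
      {π | π ∈ hairpinCompletion bar κ L1 L2 ∧ π.length = m} ⊆ f1 '' A1 ∪ f2 '' A2 := by
    rintro π ⟨hπ, rfl⟩
    obtain ⟨w, hwπ, -, ⟨hw, hπw⟩ | ⟨hw, hπw⟩⟩ :=
      exists_of_mem_hairpinCompletion hbar hπ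
    · exact Or.inl ⟨w, ⟨hw, mem_range.2 (by omega)⟩, hπw.symm⟩
    · exact Or.inr ⟨w, ⟨hw, mem_range.2 (by omega)⟩, hπw.symm⟩
  have hA1 := L1.finite_setOf_length_mem (range (m + 1))
  have hA2 := L2.finite_setOf_length_mem (range (m + 1))
  calc _ ≤ (f1 '' A1 ∪ f2 '' A2).ncard :=
        Set.ncard_le_ncard hsub ((hA1.image _).union (hA2.image _))
    _ ≤ (f1 '' A1).ncard + (f2 '' A2).ncard := Set.ncard_union_le _ _
    _ ≤ A1.ncard + A2.ncard := add_le_add (Set.ncard_image_le hA1) (Set.ncard_image_le hA2)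
    _ ≤ _ := add_le_add (L1.ncard_length_mem_le_sum _) (L2.ncard_length_mem_le_sum _)
    _ = _ := sum_add_distrib.symm

lemma countOfLength_left_le_sum_hairpinCompletion
    (hL1 : ∀ w ∈ L1, ∃ u α v : List σ, α.length = κ ∧ w = u ++ α ++ v ++ ovr bar α)
    (n : ℕ) :
    L1.countOfLength n ≤
      ∑ m ∈ Icc n (2 * n), (hairpinCompletion bar κ L1 L2).countOfLength m := by
  set T := {π | π ∈ hairpinCompletion bar κ L1 L2 ∧ π.length ∈ Icc n (2 * n)}
  have hT := (hairpinCompletion bar κ L1 L2).finite_setOf_length_mem (Icc n (2 * n))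
  have hsub : {w | w ∈ L1 ∧ w.length = n} ⊆ List.take n '' T := by
    rintro w ⟨hw, rfl⟩
    obtain ⟨π, hπ, hwπ, hlen⟩ := exists_hairpinCompletion_of_mem_left hL1 hw
    exact ⟨π, ⟨hπ, mem_Icc.2 ⟨hwπ.length_le, hlen⟩⟩,
      (List.prefix_iff_eq_take.1 hwπ).symm⟩
  calc L1.countOfLength n ≤ (List.take n '' T).ncard := Set.ncard_le_ncard hsub (hT.image _)
    _ ≤ T.ncard := Set.ncard_image_le hT
    _ ≤ _ := ncard_length_mem_le_sum _ _

lemma countOfLength_right_le_sum_hairpinCompletion (hbar : Function.Involutive bar)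
    (hL2 : ∀ w ∈ L2, ∃ α u v : List σ, α.length = κ ∧ w = α ++ u ++ ovr bar α ++ v)
    (n : ℕ) :
    L2.countOfLength n ≤
      ∑ m ∈ Icc n (2 * n), (hairpinCompletion bar κ L1 L2).countOfLength m := by
  set T := {π | π ∈ hairpinCompletion bar κ L1 L2 ∧ π.length ∈ Icc n (2 * n)}
  set f := fun π : List σ => π.drop (π.length - n)
  have hT := (hairpinCompletion bar κ L1 L2).finite_setOf_length_mem (Icc n (2 * n))
  have hsub : {w | w ∈ L2 ∧ w.length = n} ⊆ f '' T := by
    rintro w ⟨hw, rfl⟩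
    obtain ⟨π, hπ, hwπ, hlen⟩ := exists_hairpinCompletion_of_mem_right hbar hL2 hw
    exact ⟨π, ⟨hπ, mem_Icc.2 ⟨hwπ.length_le, hlen⟩⟩,
      (List.suffix_iff_eq_drop.1 hwπ).symm⟩
  calc L2.countOfLength n ≤ (f '' T).ncard := Set.ncard_le_ncard hsub (hT.image _)
    _ ≤ T.ncard := Set.ncard_image_le hT
    _ ≤ _ := ncard_length_mem_le_sum _ _

lemma growthInd_hairpinCompletion_eq_zero_iff (hbar : Function.Involutive bar)
    (hL1 : ∀ w ∈ L1, ∃ u α v : List σ, α.length = κ ∧ w = u ++ α ++ v ++ ovr bar α)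
    (hL2 : ∀ w ∈ L2, ∃ α u v : List σ, α.length = κ ∧ w = α ++ u ++ ovr bar α ++ v) :
    growthInd (hairpinCompletion bar κ L1 L2) = 0 ↔ growthInd L1 = 0 ∧ growthInd L2 = 0 := by
  simp only [growthInd_eq_zero_iff]
  exact bddAbove_length_hairpinCompletion_iff hbar hL1 hL2

lemma growthInd_hairpinCompletion_le_one_iff (hbar : Function.Involutive bar)
    (hL1 : ∀ w ∈ L1, ∃ u α v : List σ, α.length = κ ∧ w = u ++ α ++ v ++ ovr bar α)
    (hL2 : ∀ w ∈ L2, ∃ α u v : List σ, α.length = κ ∧ w = α ++ u ++ ovr bar α ++ v) :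
    growthInd (hairpinCompletion bar κ L1 L2) ≤ 1 ↔
      growthInd L1 ≤ 1 ∧ growthInd L2 ≤ 1 := by
  constructor
  · intro h
    have hH := (growthInd_le_iff _).1 h
    exact ⟨growthRate_le_one_of_le_sum_Icc (countOfLength_left_le_sum_hairpinCompletion hL1) hH,
      growthRate_le_one_of_le_sum_Icc (countOfLength_right_le_sum_hairpinCompletion hbar hL2) hH⟩
  · rintro ⟨h1, h2⟩
    exact growthRate_le_one_of_le_sum_range (countOfLength_hairpinCompletion_le hbar)
      fun t ht => add_mem_growthBounds ((growthInd_le_iff _).1 h1 t ht)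
        ((growthInd_le_iff _).1 h2 t ht)

end Hairpin

theorem growth_type_of_hairpin_completion_general
    {σ : Type} [Fintype σ]
    (bar : σ → σ) (hbar : ∀ a, bar (bar a) = a)
    (κ : ℕ)
    (L1 L2 : Language σ)
    (hL1 : ∀ w ∈ L1, ∃ u α v : List σ,
      α.length = κ ∧ w = u ++ α ++ v ++ ovr bar α)
    (hL2 : ∀ w ∈ L2, ∃ α u v : List σ,
      α.length = κ ∧ w = α ++ u ++ ovr bar α ++ v) :
    (growthInd (hairpinCompletion bar κ L1 L2) > 1 ↔
        max (growthInd L1) (growthInd L2) > 1) ∧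
    (growthInd (hairpinCompletion bar κ L1 L2) = 1 ↔
        max (growthInd L1) (growthInd L2) = 1) ∧
    (growthInd (hairpinCompletion bar κ L1 L2) = 0 ↔
        max (growthInd L1) (growthInd L2) = 0) := by
  have hH := (hairpinCompletion bar κ L1 L2).growthInd_eq_zero_or_one_le
  have h₁ := L1.growthInd_eq_zero_or_one_le
  have h₂ := L2.growthInd_eq_zero_or_one_le
  have hle := growthInd_hairpinCompletion_le_one_iff hbar hL1 hL2
  have hzero := growthInd_hairpinCompletion_eq_zero_iff hbar hL1 hL2
  grind

theorem growth_type_of_hairpin_completion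
    {σ : Type} [Fintype σ] (hσ : 2 ≤ Fintype.card σ)
    (bar : σ → σ) (hbar : ∀ a, bar (bar a) = a)
    (κ : ℕ) (hκ : 1 ≤ κ)
    (L1 L2 : Language σ) (h1 : L1.IsRegular) (h2 : L2.IsRegular)
    (hL1 : ∀ w ∈ L1, ∃ u α v : List σ,
      α.length = κ ∧ w = u ++ α ++ v ++ ovr bar α)
    (hL2 : ∀ w ∈ L2, ∃ α u v : List σ,
      α.length = κ ∧ w = α ++ u ++ ovr bar α ++ v) :
    (growthInd (hairpinCompletion bar κ L1 L2) > 1 ↔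
        max (growthInd L1) (growthInd L2) > 1) ∧
    (growthInd (hairpinCompletion bar κ L1 L2) = 1 ↔
        max (growthInd L1) (growthInd L2) = 1) ∧
    (growthInd (hairpinCompletion bar κ L1 L2) = 0 ↔
        max (growthInd L1) (growthInd L2) = 0) :=
  growth_type_of_hairpin_completion_general bar hbar κ L1 L2 hL1 hL2
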